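/- The Third Bed Argument proves at most uniqueness: assume (NI) that nothing participates in itself (∀ x, ¬ part x x), and (pairwise OM) that for any two distinct objects x, y with F x and F y there exists z with F z, part x z, and part y z. Then there is at most one object x with F x that participates in nothing: any two F-objects each participating in nothing are equal. -/
import Mathlib

/-- The Third Bed Argument proves at most uniqueness: any two F-objects each
participating in nothing are equal. -/
theorem tba_at_most_one_ultimate {X : Type*} (F : X → Prop)
    (part : X → X → Prop)
    (NI : ∀ x, ¬ part x x)
    (OM : ∀ x y, F x → F y → x ≠ y → ∃ z, F z ∧ part x z ∧ part y z) :
    ∀ x y, F x → (∀ z, ¬ part x z) → F y → (∀ z, ¬ part y z) → x = y := by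
  intro x y hx hxu hy hyu
  by_contra h
  obtain ⟨z, _, hxz, _⟩ := OM x y hx hy h
  exact hxu z hxz
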